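/- Let D be a nonprincipal ultrafilter on V such that every subspace of V of finite codimension belongs to D, and such that for every A ∈ D the set {v ∈ V : v+A ∈ D} belongs to D. Then every condition p ∈ Q_D has an extension q ∈ Q_D with |u_p| < |u_q|; in fact one may take q = (u_p ∪ {y}, 𝒜_p) for a suitable y ∈ V with max(supp x) < min(supp y) for all x ∈ u_p. -/

import Mathlib

open Set

/-- `V = ⊕_{n<ω} 𝔽₂`, realized as finitely supported functions `ℕ →₀ 𝔽₂`. -/
abbrev V : Type := ℕ →₀ ZMod 2

/-- The convex hull (in `ω`) of a finite set of natural numbers. -/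
def hull (s : Finset ℕ) : Set ℕ := {k | ∃ a ∈ s, ∃ b ∈ s, a ≤ k ∧ k ≤ b}

/-- the translate `x + A` of a set `A ⊆ V`. -/
def vset (x : V) (A : Set V) : Set V := (fun a => x + a) '' A

/-- the span (as a set) of a finite set of vectors of `V`. -/
def spanOf (s : Finset V) : Set V := (Submodule.span (ZMod 2) (s : Set V) : Set V)

/-- A condition in the forcing `ℚ_D`: a pair `(u, 𝒜)` with `u ⊆ V` finite containing `0`,
the convex hulls of supports of distinct members of `u` disjoint, and `𝒜 ⊆ D` finite. -/
structure Cond (D : Ultrafilter V) where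
  u : Finset V
  A : Finset (Set V)
  zero_mem : (0 : V) ∈ u
  supp_disj : ∀ x ∈ u, ∀ y ∈ u, x ≠ y → Disjoint (hull x.support) (hull y.support)
  mem_D : ∀ B ∈ A, (B : Set V) ∈ D

/-- The order on `ℚ_D` from Definition 3. -/
def Cond.le {D : Ultrafilter V} (p q : Cond D) : Prop :=
  -- (B)(a)
  p.u ⊆ q.u ∧
  (∀ x ∈ p.u, ∀ y ∈ q.u \ p.u, ∀ i ∈ x.support, ∀ j ∈ y.support, i < j) ∧
  -- (B)(b)
  p.A ⊆ q.A ∧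
  -- (B)(c)
  (∀ A ∈ q.A, A ∉ p.A →
    (∀ B ∈ p.A, A ⊆ B) ∧
    (∀ B ∈ p.A, ∀ x ∈ spanOf p.u, vset x B ∈ D → A ⊆ vset x B)) ∧
  -- (B)(d)
  (∀ x ∈ spanOf p.u, ∀ y ∈ spanOf (q.u \ p.u), ∀ A ∈ p.A, vset x A ∈ D →
    y ∈ vset x A ∪ {0} ∧ vset (x + y) A ∈ D)

/-! A condition `p` is extended by one vector `y` lying above `u_p`, chosen in the intersection of
the finitely many `D`-large sets: the subspace of vectors supported above `u_p` (it has finite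
codimension), the complement of `{0}`, and, for every translate `x + A ∈ D` with `x ∈ span u_p`
and `A ∈ 𝒜_p`, the set `{y ∈ x + A | y + (x + A) ∈ D}` (large by the shift hypothesis). -/

open Finsupp

theorem Finsupp.ker_restrictDom {α M R : Type*} [Semiring R] [AddCommMonoid M] [Module R M]
    (s : Set α) [DecidablePred (· ∈ s)] :
    LinearMap.ker (restrictDom M R s) = supported M R sᶜ := by
  ext v
  rw [LinearMap.mem_ker, ← Subtype.coe_inj, restrictDom_apply, mem_supported]
  simp only [ZeroMemClass.coe_zero, filter_eq_zero_iff, Set.subset_def, Finset.mem_coe,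
    mem_support_iff, Set.mem_compl_iff]
  exact forall_congr' fun _ => not_imp_not.symm

theorem Finsupp.finite_quotient_supported {α M R : Type*} [Ring R] [AddCommGroup M] [Module R M]
    [Module.Finite R M] {s : Set α} (hs : sᶜ.Finite) :
    Module.Finite R ((α →₀ M) ⧸ supported M R s) := by
  classical
  have : Finite (sᶜ : Set α) := hs
  have : Module.Finite R (supported M R sᶜ) := Module.Finite.equiv (supportedEquivFinsupp sᶜ).symm
  let f : (α →₀ M) →ₗ[R] supported M R sᶜ := restrictDom M R sᶜ
  have e := f.quotKerEquivOfSurjective (LinearMap.range_eq_top.1 (range_restrictDom _))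
  rw [ker_restrictDom, compl_compl] at e
  exact Module.Finite.equiv e.symm

lemma vset_vset (a b : V) (A : Set V) : vset a (vset b A) = vset (a + b) A := by
  simp only [vset, Set.image_image, add_assoc]

lemma spanOf_finite (s : Finset V) : (spanOf s).Finite := by
  have : Module.Finite (ZMod 2) (Submodule.span (ZMod 2) (s : Set V)) :=
    Module.Finite.span_of_finite _ s.finite_toSet
  have : Finite (Submodule.span (ZMod 2) (s : Set V)) := Module.finite_of_finite (ZMod 2)
  exact (Submodule.span (ZMod 2) (s : Set V) : Set V).toFinite

lemma eq_zero_or_eq_of_mem_spanOf_singleton {y z : V} (hz : z ∈ spanOf {y}) : z = 0 ∨ z = y := by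
  rw [spanOf, Finset.coe_singleton, SetLike.mem_coe, Submodule.mem_span_singleton] at hz
  obtain ⟨c, rfl⟩ := hz
  fin_cases c
  exacts [Or.inl (zero_smul _ y), Or.inr (one_smul _ y)]

lemma disjoint_hull_of_lt {s t : Finset ℕ} (h : ∀ i ∈ s, ∀ j ∈ t, i < j) :
    Disjoint (hull s) (hull t) := by
  rw [Set.disjoint_left]
  rintro k ⟨-, -, b, hb, -, hkb⟩ ⟨c, hc, -, -, hck, -⟩
  exact absurd (h b hb c hc) (by omega)

lemma exists_support_le (u : Finset V) : ∃ N, ∀ x ∈ u, ∀ i ∈ x.support, i ≤ N :=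
  ⟨u.sup fun x => x.support.sup id, fun _ hx _ hi =>
    (Finset.le_sup (f := id) hi).trans (Finset.le_sup (f := fun x => x.support.sup id) hx)⟩

def SupportAbove (u : Finset V) (y : V) : Prop :=
  ∀ x ∈ u, ∀ i ∈ x.support, ∀ j ∈ y.support, i < j

lemma SupportAbove.notMem {u : Finset V} {y : V} (hy : SupportAbove u y) (hy0 : y ≠ 0) :
    y ∉ u := by
  intro hyu
  obtain ⟨j, hj⟩ := Finsupp.support_nonempty_iff.mpr hy0
  exact lt_irrefl j (hy y hyu j hj j hj)

lemma supportAbove_of_supported_Ioi {u : Finset V} {N : ℕ} (hN : ∀ x ∈ u, ∀ i ∈ x.support, i ≤ N)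
    {y : V} (hy : y ∈ supported (ZMod 2) (ZMod 2) (Ioi N)) : SupportAbove u y :=
  fun x hx i hi _ hj => (hN x hx i hi).trans_lt ((mem_supported _ _).mp hy hj)

section

variable {D : Ultrafilter V}

lemma eventually_mem_supported_Ioi
    (hcodim : ∀ W : Submodule (ZMod 2) V, Module.Finite (ZMod 2) (V ⧸ W) → (W : Set V) ∈ D)
    (N : ℕ) : ∀ᶠ y in (D : Filter V), y ∈ supported (ZMod 2) (ZMod 2) (Ioi N) :=
  hcodim _ (finite_quotient_supported (by rw [compl_Ioi]; exact finite_Iic N))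

lemma eventually_mem_translates (hshift : ∀ A ∈ D, {v : V | vset v A ∈ D} ∈ D)
    {S : Set V} (hS : S.Finite) (𝒜 : Finset (Set V)) :
    ∀ᶠ y in (D : Filter V), ∀ x ∈ S, ∀ A ∈ 𝒜, vset x A ∈ D →
      y ∈ vset x A ∧ vset (x + y) A ∈ D := by
  refine hS.eventually_all.2 fun x _ => 𝒜.eventually_all.2 fun A _ => ?_
  by_cases hxA : vset x A ∈ D
  · filter_upwards [hxA, hshift _ hxA] with y hy hshifted
    rw [vset_vset, add_comm] at hshifted
    exact fun _ => ⟨hy, hshifted⟩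
  · exact Filter.Eventually.of_forall fun _ h => absurd h hxA

def Cond.extend (p : Cond D) (y : V) (hy : SupportAbove p.u y) : Cond D where
  u := insert y p.u
  A := p.A
  zero_mem := Finset.mem_insert_of_mem p.zero_mem
  supp_disj a ha b hb hab := by
    rcases Finset.mem_insert.mp ha with rfl | ha' <;> rcases Finset.mem_insert.mp hb with rfl | hb'
    · exact absurd rfl hab
    · exact (disjoint_hull_of_lt (hy b hb')).symm
    · exact disjoint_hull_of_lt (hy a ha')
    · exact p.supp_disj a ha' b hb' hab
  mem_D := p.mem_D

lemma Cond.le_extend (p : Cond D) {y : V} (hy : SupportAbove p.u y) (hy0 : y ≠ 0)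
    (hgood : ∀ x ∈ spanOf p.u, ∀ A ∈ p.A, vset x A ∈ D → y ∈ vset x A ∧ vset (x + y) A ∈ D) :
    p.le (p.extend y hy) := by
  have hnew : (p.extend y hy).u \ p.u = {y} := Finset.insert_sdiff_cancel (hy.notMem hy0)
  refine ⟨Finset.subset_insert _ _, ?_, subset_rfl, fun A hA hA' => absurd hA hA', ?_⟩
  · intro x hx z hz
    rw [hnew, Finset.mem_singleton] at hz
    exact hz ▸ hy x hx
  · intro x hx z hz A hA hxA
    rw [hnew] at hz
    rcases eq_zero_or_eq_of_mem_spanOf_singleton hz with rfl | rfl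
    · exact ⟨Or.inr rfl, by rwa [add_zero]⟩
    · exact (hgood x hx A hA hxA).imp_left Or.inl

end

open scoped Classical in
/-- Observation 13: if `D` is a nonprincipal ultrafilter on `V` containing all subspaces
of finite codimension and satisfying `A ∈ D → {v : v+A ∈ D} ∈ D`, then every `p ∈ ℚ_D`
has an extension `q` with `|u_p| < |u_q|`; in fact `q = (u_p ∪ {y}, 𝒜_p)` for a suitable
`y` whose support lies entirely above the supports of members of `u_p`. -/
theorem QD_conditions_grow (D : Ultrafilter V)
    (hnp : ∀ v : V, ({v} : Set V) ∉ D)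
    (hcodim : ∀ W : Submodule (ZMod 2) V, Module.Finite (ZMod 2) (V ⧸ W) → (W : Set V) ∈ D)
    (hshift : ∀ A ∈ D, {v : V | vset v A ∈ D} ∈ D) :
    ∀ p : Cond D, ∃ (q : Cond D) (y : V),
      q.u = insert y p.u ∧ q.A = p.A ∧ p.le q ∧ p.u.card < q.u.card ∧
      (∀ x ∈ p.u, ∀ i ∈ x.support, ∀ j ∈ y.support, i < j) := by
  intro p
  obtain ⟨N, hN⟩ := exists_support_le p.u
  have hne : ∀ᶠ y in (D : Filter V), y ≠ 0 := Ultrafilter.compl_mem_iff_notMem.mpr (hnp 0)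
  obtain ⟨y, hy0, hyN, hgood⟩ := (hne.and ((eventually_mem_supported_Ioi hcodim N).and
    (eventually_mem_translates hshift (spanOf_finite p.u) p.A))).exists
  have hy : SupportAbove p.u y := supportAbove_of_supported_Ioi hN hyN
  refine ⟨p.extend y hy, y, rfl, rfl, p.le_extend hy hy0 hgood, ?_, hy⟩
  exact Finset.card_lt_card (Finset.ssubset_insert (hy.notMem hy0))
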